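/- arXiv:1311.0789 — 4 statements merged into one kernel-verified Lean document; each statement's English description precedes it below -/
import Mathlib

section
/- For a finite semigroup S, if U is a subset of S such that every element of U is independent (i.e., for all a in U, a is not in the subsemigroup generated by U \ {a}), and U generates S, then the minimum size of a generating set of S is at most |U|; more generally, the chain of inequalities r1(S) ≤ r2(S) ≤ r3(S) ≤ r4(S) ≤ r5(S) holds, where r1 is the largest k such that every k-subset is independent, r2 the minimum size of a generating set, r3 the maximum size of an independent generating set, r4 the maximum size of an independent set, and r5 the least k such that every k-subset generates S. -/
/-- A subset `U` of a semigroup is independent if no element of `U` lies in the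
subsemigroup generated by the other elements of `U`. -/
def IndependentIn {S : Type*} [Semigroup S] (U : Set S) : Prop :=
  ∀ a ∈ U, a ∉ Subsemigroup.closure (U \ {a})

/-- `r1`: the largest `k` such that every subset of cardinality `k` is independent. -/
noncomputable def r1 (S : Type*) [Semigroup S] [Fintype S] : ℕ :=
  sSup {k | k ≤ Fintype.card S ∧ ∀ U : Set S, U.ncard = k → IndependentIn U}

/-- `r2`: the minimum cardinality of a generating set. -/
noncomputable def r2 (S : Type*) [Semigroup S] [Fintype S] : ℕ :=
  sInf {k | ∃ U : Set S, U.ncard = k ∧ Subsemigroup.closure U = ⊤}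

/-- `r3`: the maximum cardinality of an independent generating set. -/
noncomputable def r3 (S : Type*) [Semigroup S] [Fintype S] : ℕ :=
  sSup {k | ∃ U : Set S, U.ncard = k ∧ IndependentIn U ∧ Subsemigroup.closure U = ⊤}

/-- `r4`: the maximum cardinality of an independent set. -/
noncomputable def r4 (S : Type*) [Semigroup S] [Fintype S] : ℕ :=
  sSup {k | ∃ U : Set S, U.ncard = k ∧ IndependentIn U}

/-- `r5`: the least `k` such that every subset of cardinality `k` generates. -/
noncomputable def r5 (S : Type*) [Semigroup S] [Fintype S] : ℕ :=
  sInf {k | ∀ U : Set S, U.ncard = k → Subsemigroup.closure U = ⊤}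

/-- If a proper subset of `V` already generates everything, `V` is not independent. -/
lemma not_indep_of_ssubset_gen {S : Type*} [Semigroup S] {U V : Set S} (h : U ⊂ V)
    (hU : Subsemigroup.closure U = ⊤) : ¬ IndependentIn V := by
  obtain ⟨a, haV, haU⟩ := Set.exists_of_ssubset h
  intro hind
  refine hind a haV ?_
  have hsub : U ⊆ V \ {a} := fun x hx => ⟨h.1 hx, fun h' => haU (h' ▸ hx)⟩
  have : Subsemigroup.closure (V \ {a}) = ⊤ :=
    top_le_iff.mp (hU ▸ Subsemigroup.closure_mono hsub)
  simp [this]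

theorem rank_chain (S : Type*) [Semigroup S] [Fintype S] [Nonempty S] :
    (∀ U : Set S, IndependentIn U → Subsemigroup.closure U = ⊤ → r2 S ≤ U.ncard) ∧
    r1 S ≤ r2 S ∧ r2 S ≤ r3 S ∧ r3 S ≤ r4 S ∧ r4 S ≤ r5 S := by
  have huniv : Subsemigroup.closure (Set.univ : Set S) = ⊤ := Subsemigroup.closure_univ
  have hunivcard : (Set.univ : Set S).ncard = Fintype.card S := by
    rw [Set.ncard_univ, Nat.card_eq_fintype_card]
  -- r2's defining set is nonempty
  have hD : Fintype.card S ∈ {k | ∃ U : Set S, U.ncard = k ∧ Subsemigroup.closure U = ⊤} :=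
    ⟨Set.univ, hunivcard, huniv⟩
  -- a minimal generating set exists
  obtain ⟨M, hMcard, hMgen⟩ := Nat.sInf_mem (⟨_, hD⟩ :
    {k | ∃ U : Set S, U.ncard = k ∧ Subsemigroup.closure U = ⊤}.Nonempty)
  -- first clause
  have h0 : ∀ U : Set S, IndependentIn U → Subsemigroup.closure U = ⊤ → r2 S ≤ U.ncard := by
    intro U _ hgen
    exact Nat.sInf_le ⟨U, rfl, hgen⟩
  -- M is independent
  have hMindep : IndependentIn M := by
    intro a haM hamem
    have hsub : M \ {a} ⊆ M := Set.diff_subset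
    have hgen : Subsemigroup.closure (M \ {a}) = ⊤ := by
      refine top_le_iff.mp ?_
      rw [← hMgen]
      refine Subsemigroup.closure_le.mpr fun x hx => ?_
      by_cases hxa : x = a
      · exact hxa ▸ hamem
      · exact Subsemigroup.subset_closure ⟨hx, hxa⟩
    have hlt : (M \ {a}).ncard < M.ncard :=
      Set.ncard_lt_ncard (Set.sdiff_singleton_ssubset.mpr haM) (Set.toFinite M)
    have hm : (M \ {a}).ncard ∈ {k | ∃ U : Set S, U.ncard = k ∧ Subsemigroup.closure U = ⊤} :=
      ⟨M \ {a}, rfl, hgen⟩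
    have := Nat.sInf_le hm
    omega
  -- r1 ≤ r2
  have h12 : r1 S ≤ r2 S := by
    refine csSup_le ⟨0, Nat.zero_le _, fun U hU => ?_⟩ ?_
    · have : U = ∅ := (Set.ncard_eq_zero (Set.toFinite U)).mp hU
      intro a ha; simp [this] at ha
    · rintro k ⟨hk, hind⟩
      by_contra hlt
      push_neg at hlt
      -- r2 S = M.ncard, extend M to a set V of size k
      have hMk : M.ncard ≤ k := le_of_lt (hMcard ▸ hlt)
      obtain ⟨V, hMV, -, hVcard⟩ := Set.exists_subsuperset_card_eq
        (Set.subset_univ M) hMk (hunivcard ▸ hk)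
      have hr2 : r2 S = M.ncard := hMcard.symm
      have hss : M ⊂ V := by
        refine ⟨hMV, fun hVM => ?_⟩
        have := Set.ncard_le_ncard hVM (Set.toFinite M)
        omega
      exact not_indep_of_ssubset_gen hss hMgen (hind V hVcard)
  -- r2 ≤ r3
  have h23 : r2 S ≤ r3 S := by
    have hmem : r2 S ∈ {k | ∃ U : Set S, U.ncard = k ∧ IndependentIn U ∧
        Subsemigroup.closure U = ⊤} := ⟨M, hMcard, hMindep, hMgen⟩
    refine le_csSup ⟨Fintype.card S, ?_⟩ hmem
    rintro k ⟨U, rfl, -, -⟩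
    simpa [Nat.card_coe_set_eq, Set.ncard] using Set.ncard_le_ncard (Set.subset_univ U)
      (Set.toFinite _) |>.trans_eq hunivcard
  -- r3 ≤ r4
  have h34 : r3 S ≤ r4 S := by
    refine csSup_le_csSup ⟨Fintype.card S, ?_⟩ ⟨M.ncard, M, rfl, hMindep, hMgen⟩ ?_
    · rintro k ⟨U, rfl, -⟩
      exact (Set.ncard_le_ncard (Set.subset_univ U) (Set.toFinite _)).trans_eq hunivcard
    · rintro k ⟨U, hU, hind, -⟩
      exact ⟨U, hU, hind⟩
  -- r4 ≤ r5
  have h45 : r4 S ≤ r5 S := by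
    have hB : (Fintype.card S) ∈ {k | ∀ U : Set S, U.ncard = k → Subsemigroup.closure U = ⊤} := by
      intro U hU
      have : U = Set.univ := by
        refine Set.eq_of_subset_of_ncard_le (Set.subset_univ U) ?_ (Set.toFinite _)
        omega
      rw [this]; exact huniv
    obtain hr5 := Nat.sInf_mem (⟨_, hB⟩ :
      {k | ∀ U : Set S, U.ncard = k → Subsemigroup.closure U = ⊤}.Nonempty)
    refine csSup_le ⟨0, ∅, Set.ncard_empty S, fun a ha => (Set.notMem_empty a ha).elim⟩ ?_
    rintro m ⟨U, rfl, hind⟩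
    by_contra hlt
    push_neg at hlt
    obtain ⟨W, hWU, hWcard⟩ := Set.exists_subset_card_eq (le_of_lt hlt : r5 S ≤ U.ncard)
    have hWgen : Subsemigroup.closure W = ⊤ := hr5 W hWcard
    have hss : W ⊂ U := by
      refine ⟨hWU, fun hUW => ?_⟩
      have := Set.ncard_le_ncard hUW (Set.toFinite W)
      omega
    exact not_indep_of_ssubset_gen hss hWgen hind
  exact ⟨h0, h12, h23, h34, h45⟩
end

section
/- Let S be a finite semigroup and V a proper subsemigroup of S of largest possible cardinality. Then r5(S) = |V| + 1, where r5(S) is the least k such that every subset of S of cardinality k generates S. Consequently, r5(S) = |S| if and only if S contains an indecomposable element. -/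
/-!
A set of `|V| + 1` elements cannot lie in a proper subsemigroup, since that subsemigroup would be
larger than `V`; on the other hand every set of at most `|V|` elements fits inside `V`, which
generates nothing beyond itself. Hence `r5 S = |V| + 1`, and this equals `|S|` exactly when some
proper subsemigroup has the form `S \ {a}`, i.e. when `a` is indecomposable.
-/

/-- A subset closed under multiplication. -/
def IsSubsemigroupSet {S : Type*} [Semigroup S] (T : Set S) : Prop :=
  ∀ a ∈ T, ∀ b ∈ T, a * b ∈ T

open Set

section

variable {S : Type*} [Semigroup S]

def IsIndecomposable (a : S) : Prop :=
  ¬ ∃ b c : S, b ≠ a ∧ c ≠ a ∧ a = b * c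

lemma isSubsemigroupSet_compl_singleton_iff {a : S} :
    IsSubsemigroupSet ({a}ᶜ : Set S) ↔ IsIndecomposable a := by
  simp only [IsIndecomposable, not_exists, not_and, eq_comm (a := a)]
  exact ⟨fun h b c hb hc => h b hb c hc, fun h b hb c hc => h b c hb hc⟩

lemma isSubsemigroupSet_coe (W : Subsemigroup S) : IsSubsemigroupSet (W : Set S) :=
  fun _ ha _ hb => W.mul_mem ha hb

lemma Subsemigroup.coe_ssubset_univ_iff {W : Subsemigroup S} :
    (W : Set S) ⊂ univ ↔ W ≠ ⊤ := by
  rw [ssubset_univ_iff, ← Subsemigroup.coe_top, Ne, SetLike.coe_set_eq]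

lemma r5_eq_add_one [Fintype S] {n : ℕ}
    (hgen : ∀ U : Set S, U.ncard = n + 1 → Subsemigroup.closure U = ⊤)
    (hsmall : ∀ k ≤ n, ∃ U : Set S, U.ncard = k ∧ Subsemigroup.closure U ≠ ⊤) :
    r5 S = n + 1 := by
  refine le_antisymm (Nat.sInf_le hgen) (le_csInf ⟨_, hgen⟩ fun k hk => ?_)
  by_contra! hkn
  obtain ⟨U, hUk, hU⟩ := hsmall k (by omega)
  exact hU (hk U hUk)

variable {V : Set S}

lemma closure_eq_top_of_ncard_lt [Finite S]
    (hmax : ∀ T : Set S, IsSubsemigroupSet T → T ⊂ univ → T.ncard ≤ V.ncard)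
    {U : Set S} (hU : V.ncard < U.ncard) : Subsemigroup.closure U = ⊤ := by
  by_contra hne
  have hle := hmax _ (isSubsemigroupSet_coe _) (Subsemigroup.coe_ssubset_univ_iff.mpr hne)
  have := ncard_le_ncard (Subsemigroup.subset_closure (s := U))
  omega

lemma closure_ne_top_of_subset (hV : IsSubsemigroupSet V) (hVS : V ⊂ univ)
    {U : Set S} (hUV : U ⊆ V) : Subsemigroup.closure U ≠ ⊤ := by
  have hle : Subsemigroup.closure U ≤ ⟨V, fun ha hb => hV _ ha _ hb⟩ :=
    Subsemigroup.closure_le.mpr hUV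
  intro htop
  exact hVS.ne (eq_univ_of_forall fun x => hle (htop ▸ Subsemigroup.mem_top x))

theorem r5_eq_ncard_add_one [Fintype S] (hV : IsSubsemigroupSet V) (hVS : V ⊂ univ)
    (hmax : ∀ T : Set S, IsSubsemigroupSet T → T ⊂ univ → T.ncard ≤ V.ncard) :
    r5 S = V.ncard + 1 :=
  r5_eq_add_one (fun _ hU => closure_eq_top_of_ncard_lt hmax (by omega)) fun _ hk =>
    let ⟨U, hUV, hUk⟩ := exists_subset_card_eq hk
    ⟨U, hUk, closure_ne_top_of_subset hV hVS hUV⟩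

theorem ncard_add_one_eq_card_iff_exists_isIndecomposable [Finite S]
    (hV : IsSubsemigroupSet V) (hVS : V ⊂ univ)
    (hmax : ∀ T : Set S, IsSubsemigroupSet T → T ⊂ univ → T.ncard ≤ V.ncard) :
    V.ncard + 1 = Nat.card S ↔ (∃ a : S, IsIndecomposable a) := by
  simp_rw [← isSubsemigroupSet_compl_singleton_iff]
  constructor
  · intro hcard
    obtain ⟨a, ha⟩ := ncard_eq_one.mp (ncard_compl_of_ncard_eq_add V (n := 1) (by omega))
    rw [← compl_compl V, ha] at hV
    exact ⟨a, hV⟩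
  · rintro ⟨a, ha⟩
    have hle := hmax _ ha (ssubset_univ_iff.mpr fun h => by simpa using h.ge (mem_univ a))
    have hlt := ncard_lt_card hVS.ne
    rw [ncard_compl, ncard_singleton] at hle
    omega

end

theorem large_rank_eq_general (S : Type*) [Semigroup S] [Fintype S]
    (V : Set S) (h1 : IsSubsemigroupSet V) (h2 : V ⊂ Set.univ)
    (h3 : ∀ T : Set S, IsSubsemigroupSet T → T ⊂ Set.univ → T.ncard ≤ V.ncard) :
    r5 S = V.ncard + 1 ∧
    (r5 S = Fintype.card S ↔ ∃ a : S, ¬ ∃ b c : S, b ≠ a ∧ c ≠ a ∧ a = b * c) := by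
  have hr5 : r5 S = V.ncard + 1 := r5_eq_ncard_add_one h1 h2 h3
  refine ⟨hr5, ?_⟩
  rw [hr5, ← Nat.card_eq_fintype_card]
  exact ncard_add_one_eq_card_iff_exists_isIndecomposable h1 h2 h3

theorem large_rank_eq (S : Type*) [Semigroup S] [Fintype S] [Nonempty S]
    (V : Set S) (h1 : IsSubsemigroupSet V) (h2 : V ⊂ Set.univ)
    (h3 : ∀ T : Set S, IsSubsemigroupSet T → T ⊂ Set.univ → T.ncard ≤ V.ncard) :
    r5 S = V.ncard + 1 ∧
    (r5 S = Fintype.card S ↔ ∃ a : S, ¬ ∃ b c : S, b ≠ a ∧ c ≠ a ∧ a = b * c) :=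
  large_rank_eq_general S V h1 h2 h3
end

section
/- Let G be a finite group with identity e and let {g_1, …, g_r} be a generating set of G of minimum cardinality. Then the set {(1,g_1,1), …, (1,g_{r-1},1), (1,g_r,2), (2,e,3), …, (n-1,e,n), (n,e,1)} of r + n - 1 elements is a generating set of minimum cardinality of the Brandt semigroup B(G,n), for n ≥ 2. -/
/-- The Brandt semigroup `B(G, n)` over a group (or semigroup) `G`. -/
def BrandtSG (G : Type*) (n : ℕ) : Type _ := Option (Fin n × G × Fin n)

def BrandtSG.mul {G : Type*} [Mul G] {n : ℕ} : BrandtSG G n → BrandtSG G n → BrandtSG G n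
  | some (i, a, j), some (k, b, l) => if j = k then some (i, a * b, l) else none
  | _, _ => none

instance (G : Type*) [Mul G] (n : ℕ) : Mul (BrandtSG G n) := ⟨BrandtSG.mul⟩

instance (G : Type*) [Semigroup G] (n : ℕ) : Semigroup (BrandtSG G n) where
  mul_assoc a b c := by
    show BrandtSG.mul (BrandtSG.mul a b) c = BrandtSG.mul a (BrandtSG.mul b c)
    unfold BrandtSG at a b c
    rcases a with _ | ⟨i, a, j⟩ <;> rcases b with _ | ⟨k, b, l⟩ <;> rcases c with _ | ⟨p, c, q⟩
    all_goals delta BrandtSG.mul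
    all_goals dsimp only
    all_goals try (by_cases h1 : j = k)
    all_goals try (by_cases h2 : l = p)
    all_goals simp_all [mul_assoc]
    all_goals rfl

/-!
Indices run over `Fin n`, so the paper's index `k` is `k - 1` here.

A generating set `U` of `B(G, n)` must link every pair of indices, so it contains `n - 1`
elements `(p v, a v, v)`, one into each index `v ≠ 0`, forming an arborescence rooted at `0`.
Choosing potentials `ρ` along it, the labels `ρ i * a * (ρ j)⁻¹` of the elements `(i, a, j)`
multiply along every nonzero product and are `1` on the arborescence; hence the labels of the
other `|U| - (n - 1)` elements generate `G`, and `|U| ≥ r + n - 1`.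
Conversely, the path `(1, 1, 2), …, (n - 1, 1, 0)` closed up by `(0, g_r, 1)` yields
`(0, g_r, 0)` and links all indices, while in a finite group the subsemigroup generated by
`g_1, …, g_r` is already `G`. The proposed set has at most `r + n - 1` elements, so the lower
bound is attained.
-/

theorem Subsemigroup.mem_closure_of_mem_subgroupClosure {G : Type*} [Group G] [Finite G]
    {s : Set G} (hs : s.Nonempty) {x : G} (hx : x ∈ Subgroup.closure s) :
    x ∈ Subsemigroup.closure s := by
  have hmon : ∀ y ∈ Subgroup.closure s, y = 1 ∨ y ∈ Subsemigroup.closure s := by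
    intro y hy
    rw [← Subgroup.mem_toSubmonoid, Subgroup.closure_toSubmonoid_of_finite, ← SetLike.mem_coe,
      Submonoid.closure_eq_one_union] at hy
    simpa using hy
  obtain ⟨a, ha⟩ := hs
  have hone : (1 : G) ∈ Subsemigroup.closure s := by
    rcases hmon a⁻¹ (inv_mem (Subgroup.subset_closure ha)) with h | h
    · exact inv_eq_one.mp h ▸ Subsemigroup.subset_closure ha
    · simpa using mul_mem h (Subsemigroup.subset_closure ha)
  rcases hmon x hx with rfl | h
  exacts [hone, h]

namespace BrandtSG

variable {G : Type*} {n : ℕ}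

def of (i : Fin n) (a : G) (j : Fin n) : BrandtSG G n := some (i, a, j)

instance [Finite G] : Finite (BrandtSG G n) :=
  inferInstanceAs (Finite (Option (Fin n × G × Fin n)))

@[simp]
theorem of_inj {i j i' j' : Fin n} {a a' : G} :
    of i a j = of i' a' j' ↔ i = i' ∧ a = a' ∧ j = j' := by
  refine ⟨fun h => ?_, fun ⟨hi, ha, hj⟩ => hi ▸ ha ▸ hj ▸ rfl⟩
  cases h
  exact ⟨rfl, rfl, rfl⟩

theorem of_ne_none (i j : Fin n) (a : G) : of i a j ≠ none := Option.some_ne_none _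

section Mul

variable [Mul G]

@[simp]
theorem of_mul_of (i j k : Fin n) (a b : G) : of i a j * of j b k = of i (a * b) k :=
  if_pos rfl

theorem of_mul_of_of_ne {i j k l : Fin n} (a b : G) (h : j ≠ k) :
    of i a j * of k b l = none :=
  if_neg h

theorem exists_of_mul_eq_of {x y : BrandtSG G n} {i k : Fin n} {a : G}
    (h : x * y = of i a k) : ∃ j b c, x = of i b j ∧ y = of j c k ∧ a = b * c := by
  rcases x with _ | ⟨i', b, j⟩
  · exact absurd h.symm (of_ne_none _ _ _)
  rcases y with _ | ⟨j', c, k'⟩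
  · exact absurd h.symm (of_ne_none _ _ _)
  change of i' b j * of j' c k' = _ at h
  obtain rfl | hj := eq_or_ne j j'
  · obtain ⟨rfl, rfl, rfl⟩ := of_inj.mp ((of_mul_of i' j k' b c).symm.trans h)
    exact ⟨j, b, c, rfl, rfl, rfl⟩
  · exact absurd ((of_mul_of_of_ne b c hj).symm.trans h).symm (of_ne_none _ _ _)

theorem exists_crossing_of_of_mem_closure {U : Set (BrandtSG G n)} {R : Set (Fin n)}
    {i j : Fin n} {a : G} (h : of i a j ∈ Subsemigroup.closure U) (hi : i ∈ R) (hj : j ∉ R) :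
    ∃ k b l, of k b l ∈ U ∧ k ∈ R ∧ l ∉ R := by
  suffices ∀ x ∈ Subsemigroup.closure U, ∀ i a j, x = of i a j → i ∈ R → j ∉ R →
      ∃ k b l, of k b l ∈ U ∧ k ∈ R ∧ l ∉ R from this _ h i a j rfl hi hj
  intro x hx
  induction hx using Subsemigroup.closure_induction with
  | mem x hx => rintro i a j rfl hi hj; exact ⟨i, a, j, hx, hi, hj⟩
  | mul x y _ _ ihx ihy =>
    intro i a j hxy hi hj
    obtain ⟨k, b, c, rfl, rfl, -⟩ := exists_of_mul_eq_of hxy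
    by_cases hk : k ∈ R
    · exact ihy k c j rfl hk hj
    · exact ihx i b k rfl hi hk

end Mul

section LowerBound

variable [Group G]

def label (ρ : Fin n → G) : BrandtSG G n → G
  | some (i, a, j) => ρ i * a * (ρ j)⁻¹
  | none => 1

@[simp]
theorem label_of (ρ : Fin n → G) (i j : Fin n) (a : G) :
    label ρ (of i a j) = ρ i * a * (ρ j)⁻¹ :=
  rfl

def labelPreimage (ρ : Fin n → G) (H : Subgroup G) : Subsemigroup (BrandtSG G n) where
  carrier := {x | label ρ x ∈ H}
  mul_mem' {x y} hx hy := by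
    rcases x with _ | ⟨i, a, j⟩
    · exact H.one_mem
    rcases y with _ | ⟨k, b, l⟩
    · exact H.one_mem
    change label ρ (of i a j) ∈ H at hx
    change label ρ (of k b l) ∈ H at hy
    change label ρ (of i a j * of k b l) ∈ H
    obtain rfl | hjk := eq_or_ne j k
    · convert H.mul_mem hx hy using 1
      simp only [of_mul_of, label_of]
      group
    · rw [of_mul_of_of_ne a b hjk]
      exact H.one_mem

theorem closure_label_image_eq_top [NeZero n] {U : Set (BrandtSG G n)}
    (hU : Subsemigroup.closure U = ⊤) (ρ : Fin n → G) :
    Subgroup.closure (label ρ '' U) = ⊤ := by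
  have hle : Subsemigroup.closure U ≤ labelPreimage ρ (Subgroup.closure (label ρ '' U)) :=
    Subsemigroup.closure_le.mpr fun x hx => Subgroup.subset_closure ⟨x, hx, rfl⟩
  rw [hU] at hle
  refine eq_top_iff.mpr fun y _ => ?_
  have := hle (Subsemigroup.mem_top (of 0 ((ρ 0)⁻¹ * y * ρ 0) 0))
  simpa [labelPreimage, mul_assoc] using this

variable [NeZero n]

/-- `e v = (p, a)` records an element `(p, a, v)` of `U` entering `v` from its parent `p`;
the potential `ρ` gives all these elements label `1`. -/
def IsArborescence (U : Set (BrandtSG G n)) (R : Finset (Fin n)) (ρ : Fin n → G)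
    (e : Fin n → Fin n × G) : Prop :=
  ∀ v ∈ R, v ≠ 0 →
    (e v).1 ∈ R ∧ of (e v).1 (e v).2 v ∈ U ∧ ρ (e v).1 * (e v).2 = ρ v

theorem IsArborescence.insert {U : Set (BrandtSG G n)} {R : Finset (Fin n)}
    {ρ : Fin n → G} {e : Fin n → Fin n × G} (h : IsArborescence U R ρ e)
    {i j : Fin n} {a : G} (hi : i ∈ R) (hj : j ∉ R) (hU : of i a j ∈ U) :
    IsArborescence U (insert j R) (Function.update ρ j (ρ i * a))
      (Function.update e j (i, a)) := by
  intro v hv hv0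
  rcases Finset.mem_insert.mp hv with rfl | hvR
  · have hiv : i ≠ v := ne_of_mem_of_not_mem hi hj
    simp [hiv, hi, hU]
  · have hvj : v ≠ j := ne_of_mem_of_not_mem hvR hj
    obtain ⟨hpR, hpU, hpρ⟩ := h v hvR hv0
    have hpj : (e v).1 ≠ j := ne_of_mem_of_not_mem hpR hj
    simp [hvj, hpj, hpR, hpU, hpρ]

theorem exists_potential_of_closure_eq_top {U : Set (BrandtSG G n)}
    (hU : Subsemigroup.closure U = ⊤) :
    ∃ (ρ : Fin n → G) (e : Fin n → Fin n × G),
      ∀ v ≠ 0, of (e v).1 (e v).2 v ∈ U ∧ ρ (e v).1 * (e v).2 = ρ v := by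
  classical
  obtain ⟨R, hR, hmax⟩ := (Finset.univ.filter fun R : Finset (Fin n) =>
      0 ∈ R ∧ ∃ ρ e, IsArborescence U R ρ e).exists_max_image Finset.card
    ⟨{0}, Finset.mem_filter.mpr ⟨Finset.mem_univ _, Finset.mem_singleton_self 0, 1,
      fun _ => (0, 1), fun v hv hv0 => absurd (Finset.mem_singleton.mp hv) hv0⟩⟩
  obtain ⟨h0R, ρ, e, he⟩ := (Finset.mem_filter.mp hR).2
  obtain rfl | ⟨j, hj⟩ : R = Finset.univ ∨ ∃ j, j ∉ R := by
    by_contra! h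
    exact h.1 (Finset.eq_univ_iff_forall.mpr h.2)
  · exact ⟨ρ, e, fun v hv => (he v (Finset.mem_univ v) hv).2⟩
  obtain ⟨k, b, l, hkl, hk, hl⟩ := exists_crossing_of_of_mem_closure (R := R)
    (hU ▸ Subsemigroup.mem_top (of 0 (1 : G) j)) h0R hj
  have := hmax (insert l R) (Finset.mem_filter.mpr ⟨Finset.mem_univ _,
    Finset.mem_insert_of_mem h0R, _, _, he.insert hk hl hkl⟩)
  rw [Finset.card_insert_of_notMem hl] at this
  omega

theorem exists_closure_eq_top_ncard_add_le [Finite G] {U : Set (BrandtSG G n)}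
    (hU : Subsemigroup.closure U = ⊤) :
    ∃ X : Set G, Subgroup.closure X = ⊤ ∧ X.ncard + (n - 1) ≤ U.ncard := by
  obtain ⟨ρ, e, he⟩ := exists_potential_of_closure_eq_top hU
  set T := (fun v => of (e v).1 (e v).2 v) '' ({0}ᶜ : Set (Fin n))
  have hTU : T ⊆ U := by
    rintro _ ⟨v, hv, rfl⟩
    exact (he v hv).1
  have hT : T.ncard = n - 1 := by
    rw [Set.ncard_image_of_injective _ fun v w h => (of_inj.mp h).2.2, Set.ncard_compl,
      Set.ncard_singleton, Nat.card_eq_fintype_card, Fintype.card_fin]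
  have hlabel : label ρ '' U ⊆ insert 1 (label ρ '' (U \ T)) := by
    rintro _ ⟨x, hx, rfl⟩
    by_cases hxT : x ∈ T
    · obtain ⟨v, hv, rfl⟩ := hxT
      exact Or.inl (by simp [← (he v hv).2])
    · exact Or.inr ⟨x, ⟨hx, hxT⟩, rfl⟩
  refine ⟨label ρ '' (U \ T), ?_, ?_⟩
  · rw [← Subgroup.closure_insert_one, eq_top_iff, ← closure_label_image_eq_top hU ρ]
    exact Subgroup.closure_mono hlabel
  · calc (label ρ '' (U \ T)).ncard + (n - 1) ≤ (U \ T).ncard + T.ncard :=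
          add_le_add (Set.ncard_image_le (Set.toFinite _)) hT.ge
      _ = U.ncard := Set.ncard_sdiff_add_ncard_of_subset hTU

end LowerBound

section Generation

variable [NeZero n]

section Monoid

variable [Monoid G] {S : Subsemigroup (BrandtSG G n)}

theorem of_one_zero_mem_of_cycle (hc : ∀ i : Fin n, i ≠ 0 → of i 1 (i + 1) ∈ S) {i : Fin n}
    (hi : i ≠ 0) : of i 1 0 ∈ S := by
  obtain ⟨m, rfl⟩ := Nat.exists_eq_succ_of_ne_zero (NeZero.ne n)
  induction i using Fin.reverseInduction with
  | last => simpa [Fin.last_add_one] using hc _ hi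
  | cast i ih =>
    simpa [Fin.coeSucc_eq_succ] using S.mul_mem (hc _ hi) (ih (Fin.succ_ne_zero i))

theorem of_zero_mem_of_cycle (hc : ∀ i : Fin n, i ≠ 0 → of i 1 (i + 1) ∈ S) {x : G}
    (hx : of 0 x 1 ∈ S) {j : Fin n} (hj : j ≠ 0) : of 0 x j ∈ S := by
  obtain ⟨m, rfl⟩ := Nat.exists_eq_succ_of_ne_zero (NeZero.ne n)
  induction j using Fin.induction with
  | zero => exact absurd rfl hj
  | succ j ih =>
    rcases eq_or_ne j.castSucc 0 with h | h
    · have : NeZero m := NeZero.of_pos j.pos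
      rwa [Fin.castSucc_eq_zero_iff.mp h, Fin.succ_zero_eq_one']
    · simpa [Fin.coeSucc_eq_succ] using S.mul_mem (ih h) (hc _ h)

end Monoid

theorem eq_top_of_mem_cycle [Group G] [Finite G] (h10 : (1 : Fin n) ≠ 0)
    {S : Subsemigroup (BrandtSG G n)} {s : Set G} {a : G} (hgen : Subgroup.closure s = ⊤)
    (hs : ∀ x ∈ s, x = a ∨ of 0 x 0 ∈ S) (ha : of 0 a 1 ∈ S)
    (hc : ∀ i : Fin n, i ≠ 0 → of i 1 (i + 1) ∈ S) : S = ⊤ := by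
  have ha0 : of 0 a 0 ∈ S := by
    simpa using S.mul_mem ha (of_one_zero_mem_of_cycle hc h10)
  let diag : G →ₙ* BrandtSG G n :=
    ⟨fun x => of 0 x 0, fun x y => (of_mul_of 0 0 0 x y).symm⟩
  have hdiag : ∀ x, of 0 x 0 ∈ S := by
    have hle : Subsemigroup.closure (insert a s) ≤ S.comap diag := by
      refine Subsemigroup.closure_le.mpr fun x hx => ?_
      rcases hx with rfl | hx
      · exact ha0
      · rcases hs x hx with rfl | h
        exacts [ha0, h]
    intro x
    refine hle (Subsemigroup.mem_closure_of_mem_subgroupClosure (Set.insert_nonempty a s) ?_)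
    exact Subgroup.closure_mono (Set.subset_insert a s) (hgen ▸ Subgroup.mem_top x)
  have hrow : ∀ x j, of 0 x j ∈ S := by
    intro x j
    rcases eq_or_ne j 0 with rfl | hj
    · exact hdiag x
    · exact of_zero_mem_of_cycle hc (by simpa using S.mul_mem (hdiag (x * a⁻¹)) ha) hj
  refine (Subsemigroup.eq_top_iff' S).mpr ?_
  rintro (_ | ⟨i, x, j⟩)
  · simpa [of_mul_of_of_ne a a h10] using S.mul_mem ha ha
  · change of i x j ∈ S
    rcases eq_or_ne i 0 with rfl | hi
    · exact hrow x j
    · simpa using S.mul_mem (of_one_zero_mem_of_cycle hc hi) (hrow x j)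

end Generation

end BrandtSG

theorem brandt_min_generating_set (G : Type*) [Group G] [Fintype G] (n r : ℕ) [NeZero n]
    (hn : 2 ≤ n) (hr : 1 ≤ r) (g : Fin r → G)
    (hgen : Subgroup.closure (Set.range g) = ⊤)
    (hmin : ∀ X : Set G, Subgroup.closure X = ⊤ → r ≤ X.ncard) :
    let P : Set (BrandtSG G n) :=
      {x | ∃ i : Fin r, (i : ℕ) < r - 1 ∧ x = some (0, g i, 0)} ∪
      {some (0, g ⟨r - 1, by omega⟩, 1)} ∪
      {x | ∃ i : Fin n, i ≠ 0 ∧ x = some (i, 1, i + 1)}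
    P.ncard = r + n - 1 ∧ Subsemigroup.closure P = ⊤ ∧
      ∀ U : Set (BrandtSG G n), Subsemigroup.closure U = ⊤ → r + n - 1 ≤ U.ncard := by
  intro P
  have h10 : (1 : Fin n) ≠ 0 := by rw [Ne, Fin.one_eq_zero_iff]; omega
  have hP : Subsemigroup.closure P = ⊤ := by
    refine BrandtSG.eq_top_of_mem_cycle h10 hgen ?_
      (Subsemigroup.subset_closure (.inl (.inr rfl)))
      fun i hi => Subsemigroup.subset_closure (.inr ⟨i, hi, rfl⟩)
    rintro _ ⟨i, rfl⟩
    by_cases hi : (i : ℕ) < r - 1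
    · exact .inr (Subsemigroup.subset_closure (.inl (.inl ⟨i, hi, rfl⟩)))
    · exact .inl (congrArg g (Fin.ext (show (i : ℕ) = r - 1 by omega)))
  have hlower (U : Set (BrandtSG G n)) (hU : Subsemigroup.closure U = ⊤) :
      r + n - 1 ≤ U.ncard := by
    obtain ⟨X, hX, hcard⟩ := BrandtSG.exists_closure_eq_top_ncard_add_le hU
    have := hmin X hX
    omega
  have hsub : P ⊆
      (fun i : Fin r => BrandtSG.of 0 (g i) (if (i : ℕ) < r - 1 then 0 else 1)) '' Set.univ ∪
        (fun i : Fin n => BrandtSG.of i (1 : G) (i + 1)) '' {0}ᶜ := by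
    rintro _ ((⟨i, hi, rfl⟩ | rfl) | ⟨i, hi, rfl⟩)
    · exact .inl ⟨i, trivial, congrArg (BrandtSG.of 0 (g i)) (if_pos hi)⟩
    · exact .inl ⟨⟨r - 1, by omega⟩, trivial,
        congrArg (BrandtSG.of 0 (g _)) (if_neg (lt_irrefl (r - 1)))⟩
    · exact .inr ⟨i, hi, rfl⟩
  refine ⟨le_antisymm ?_ (hlower P hP), hP, hlower⟩
  calc P.ncard ≤ _ := Set.ncard_le_ncard hsub
    _ ≤ _ := Set.ncard_union_le _ _
    _ ≤ r + (n - 1) := by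
      gcongr <;> refine (Set.ncard_image_le (Set.toFinite _)).trans ?_
      · rw [Set.ncard_univ, Nat.card_eq_fintype_card, Fintype.card_fin]
      · rw [Set.ncard_compl, Set.ncard_singleton, Nat.card_eq_fintype_card, Fintype.card_fin]
    _ = r + n - 1 := by omega
end

section
/- For n ≥ 2, in the multiplicative semigroup A^+(B_n) (whose elements are the constant maps ξ_c for c ∈ B_n, the n-support maps (p,q;σ) for p,q ∈ [n] and σ ∈ S_n, and the singleton-support maps sending (k,l) to (p,q) and all else to θ), if f = g_1 g_2 ⋯ g_k is a product of non-θ-constant elements and f is an n-support map, then every g_i is an n-support map; conversely, a product of n-support maps is either the constant θ map or an n-support map. -/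
def Bn (n : ℕ) : Type := Option (Fin n × Fin n)

def Bn.mul {n : ℕ} : Bn n → Bn n → Bn n
  | some (i, j), some (k, l) => if j = k then some (i, l) else none
  | _, _ => none

instance (n : ℕ) : Mul (Bn n) := ⟨Bn.mul⟩

instance (n : ℕ) : Semigroup (Bn n) where
  mul_assoc a b c := by
    show Bn.mul (Bn.mul a b) c = Bn.mul a (Bn.mul b c)
    have e1 : ∀ x : Bn n, Bn.mul x none = none := by intro x; rcases x with _ | ⟨_, _⟩ <;> rfl
    have e2 : ∀ i j k l : Fin n, Bn.mul (some (i, j)) (some (k, l)) =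
        if j = k then some (i, l) else none := fun _ _ _ _ => rfl
    have e3 : ∀ x : Bn n, Bn.mul none x = none := fun _ => rfl
    rcases a with _ | ⟨i, j⟩ <;> rcases b with _ | ⟨k, l⟩ <;> rcases c with _ | ⟨p, q⟩ <;>
      try rfl
    · erw [e1, e1]
    · erw [e2, e2]
      by_cases h1 : j = k <;> by_cases h2 : l = p
      · erw [if_pos h1, if_pos h2, e2, e2, if_pos h2, if_pos h1]
      · erw [if_pos h1, if_neg h2, e2, e1, if_neg h2]
      · erw [if_neg h1, if_pos h2, e3, e2, if_neg h1]
      · erw [if_neg h1, if_neg h2, e3]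

/-- Maps on `Bn n`, composed left-to-right: `x (f * g) = (x f) g`. -/
def MapBn (n : ℕ) : Type := Bn n → Bn n

instance (n : ℕ) : Monoid (MapBn n) where
  mul f g := fun x => g (f x)
  one := fun x => x
  mul_assoc _ _ _ := rfl
  one_mul _ := rfl
  mul_one _ := rfl

/-- The constant map `ξ_c`. -/
def constMap (n : ℕ) (c : Bn n) : MapBn n := fun _ => c

/-- The `n`-support map `(p, q; σ)`, sending `(i, p) ↦ (iσ, q)` and all else to `θ`. -/
def nSuppMap (n : ℕ) (p q : Fin n) (σ : Equiv.Perm (Fin n)) : MapBn n :=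
  fun x =>
    match x with
    | some (i, j) => if j = p then some (σ i, q) else none
    | none => none

instance (n : ℕ) : DecidableEq (Bn n) :=
  inferInstanceAs (DecidableEq (Option (Fin n × Fin n)))

/-- The singleton-support map `((k,l) → (p,q))`. -/
def sglMap (n : ℕ) (k l p q : Fin n) : MapBn n :=
  fun x => @ite _ (x = some (k, l)) (instDecidableEqBn n x (some (k, l))) (some (p, q)) none

/-- The multiplicative semigroup reduct `A⁺(Bₙ)`, as a set of maps on `Bn n`. -/
def APlus (n : ℕ) : Set (MapBn n) :=
  {f | (∃ c, f = constMap n c) ∨ (∃ p q σ, f = nSuppMap n p q σ) ∨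
       (∃ k l p q, f = sglMap n k l p q)}

/-!
An `n`-support map with `n ≥ 2` takes two distinct non-`θ` values, and the image of a product
`g * r` lies in the image of `r`; so in `f = u * g * r` with `f` an `n`-support map, the factor
`g * r` still takes two distinct non-`θ` values. A constant `g` cannot do this, and neither can a
singleton-support `g`: every product `r` of elements of `A⁺(Bₙ)` is constant or fixes `θ`, so `g * r`
is constant or supported at a single point. Conversely, `n`-support maps compose to an `n`-support
map or to `ξ_θ`, according as the output column of the first matches the input column of the second.
-/

namespace MapBn

variable {n : ℕ}

theorem constMap_mul (c : Bn n) (g : MapBn n) : constMap n c * g = constMap n (g c) := rfl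

theorem mul_constMap (f : MapBn n) (c : Bn n) : f * constMap n c = constMap n c := rfl

theorem nSuppMap_some (p q : Fin n) (σ : Equiv.Perm (Fin n)) (i j : Fin n) :
    nSuppMap n p q σ (some (i, j)) = if j = p then some (σ i, q) else none := rfl

theorem nSuppMap_mul_nSuppMap_of_eq {p q q' : Fin n} (σ σ' : Equiv.Perm (Fin n)) :
    nSuppMap n p q σ * nSuppMap n q q' σ' = nSuppMap n p q' (σ.trans σ') := by
  funext x
  rcases x with _ | ⟨i, j⟩
  · rfl
  · show nSuppMap n q q' σ' (nSuppMap n p q σ (some (i, j))) = _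
    by_cases hj : j = p
    · rw [nSuppMap_some, if_pos hj, nSuppMap_some, if_pos rfl, nSuppMap_some, if_pos hj]
      rfl
    · rw [nSuppMap_some, nSuppMap_some, if_neg hj, if_neg hj]
      rfl

theorem nSuppMap_mul_nSuppMap_of_ne {p q p' q' : Fin n} (σ σ' : Equiv.Perm (Fin n))
    (h : q ≠ p') : nSuppMap n p q σ * nSuppMap n p' q' σ' = constMap n none := by
  funext x
  rcases x with _ | ⟨i, j⟩
  · rfl
  · show nSuppMap n p' q' σ' (nSuppMap n p q σ (some (i, j))) = none
    by_cases hj : j = p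
    · rw [nSuppMap_some, if_pos hj, nSuppMap_some, if_neg h]
    · rw [nSuppMap_some, if_neg hj]
      rfl

theorem prod_eq_constMap_none_or_nSuppMap {l : List (MapBn n)} (hl : l ≠ [])
    (h : ∀ g ∈ l, ∃ p q σ, g = nSuppMap n p q σ) :
    l.prod = constMap n none ∨ ∃ p q σ, l.prod = nSuppMap n p q σ := by
  refine List.prod_induction_nonempty
    (fun f => f = constMap n none ∨ ∃ p q σ, f = nSuppMap n p q σ) ?_ hl fun g hg => Or.inr (h g hg)
  rintro a b (rfl | ⟨p, q, σ, rfl⟩) (rfl | ⟨p', q', σ', rfl⟩)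
  · exact Or.inl rfl
  · exact Or.inl rfl
  · exact Or.inl rfl
  · by_cases hq : q = p'
    · subst hq
      exact Or.inr ⟨p, q', σ.trans σ', nSuppMap_mul_nSuppMap_of_eq σ σ'⟩
    · exact Or.inl (nSuppMap_mul_nSuppMap_of_ne σ σ' hq)

theorem sglMap_apply_of_ne (k l p q : Fin n) {x : Bn n} (hx : x ≠ some (k, l)) :
    sglMap n k l p q x = none := if_neg hx

def ConstOrFixesNone (f : MapBn n) : Prop :=
  (∃ c, f = constMap n c) ∨ f none = none

theorem ConstOrFixesNone.mul {f g : MapBn n} (hf : ConstOrFixesNone f)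
    (hg : ConstOrFixesNone g) : ConstOrFixesNone (f * g) := by
  rcases hf with ⟨c, rfl⟩ | hf
  · exact Or.inl ⟨g c, constMap_mul c g⟩
  rcases hg with ⟨c, rfl⟩ | hg
  · exact Or.inl ⟨c, mul_constMap f c⟩
  · exact Or.inr (show g (f none) = none by rw [hf, hg])

theorem constOrFixesNone_of_mem_aPlus {f : MapBn n} (hf : f ∈ APlus n) :
    ConstOrFixesNone f := by
  rcases hf with hc | ⟨p, q, σ, rfl⟩ | ⟨k, l, p, q, rfl⟩
  · exact Or.inl hc
  · exact Or.inr rfl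
  · exact Or.inr (sglMap_apply_of_ne k l p q (Option.some_ne_none _).symm)

theorem constOrFixesNone_prod {l : List (MapBn n)} (h : ∀ g ∈ l, g ∈ APlus n) :
    ConstOrFixesNone l.prod :=
  List.prod_induction _ (fun _ _ => ConstOrFixesNone.mul) (Or.inr rfl)
    fun g hg => constOrFixesNone_of_mem_aPlus (h g hg)

def TakesTwoValues (f : MapBn n) : Prop :=
  ∃ x y, f x ≠ none ∧ f y ≠ none ∧ f x ≠ f y

theorem TakesTwoValues.of_mul {f g : MapBn n} (h : TakesTwoValues (f * g)) :
    TakesTwoValues g := by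
  obtain ⟨x, y, hx, hy, hxy⟩ := h
  exact ⟨f x, f y, hx, hy, hxy⟩

theorem not_takesTwoValues_constMap (c : Bn n) : ¬ TakesTwoValues (constMap n c) :=
  fun ⟨_, _, _, _, hxy⟩ => hxy rfl

theorem takesTwoValues_nSuppMap (hn : 2 ≤ n) (p q : Fin n) (σ : Equiv.Perm (Fin n)) :
    TakesTwoValues (nSuppMap n p q σ) := by
  let i : Fin n := ⟨0, by omega⟩
  let j : Fin n := ⟨1, by omega⟩
  have hij : i ≠ j := by simp [i, j, Fin.ext_iff]
  refine ⟨some (i, p), some (j, p), ?_, ?_, ?_⟩ <;> rw [nSuppMap_some, if_pos rfl]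
  · exact Option.some_ne_none _
  · exact Option.some_ne_none _
  · rw [nSuppMap_some, if_pos rfl]
    exact fun h => hij (σ.injective (Prod.ext_iff.mp (Option.some_injective _ h)).1)

theorem not_takesTwoValues_sglMap_mul (k l p q : Fin n) {r : MapBn n}
    (hr : ConstOrFixesNone r) : ¬ TakesTwoValues (sglMap n k l p q * r) := by
  rcases hr with ⟨c, rfl⟩ | hr
  · exact not_takesTwoValues_constMap c
  rintro ⟨x, y, hx, hy, hxy⟩
  have supp_eq : ∀ z, (sglMap n k l p q * r) z ≠ none → z = some (k, l) := by
    intro z hz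
    by_contra hne
    exact hz (show r (sglMap n k l p q z) = none by rw [sglMap_apply_of_ne k l p q hne, hr])
  exact hxy (by rw [supp_eq x hx, supp_eq y hy])

theorem eq_nSuppMap_of_takesTwoValues_mul {g r : MapBn n} (hg : g ∈ APlus n)
    (hr : ConstOrFixesNone r) (h : TakesTwoValues (g * r)) :
    ∃ p q σ, g = nSuppMap n p q σ := by
  rcases hg with ⟨c, rfl⟩ | hns | ⟨k, l, p, q, rfl⟩
  · exact absurd (constMap_mul c r ▸ h) (not_takesTwoValues_constMap _)
  · exact hns
  · exact absurd h (not_takesTwoValues_sglMap_mul k l p q hr)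

end MapBn

theorem nSupp_products (n : ℕ) (hn : 2 ≤ n) (l : List (MapBn n)) (hl : l ≠ [])
    (hmem : ∀ g ∈ l, g ∈ APlus n ∧ g ≠ constMap n none) :
    ((∃ p q σ, l.prod = nSuppMap n p q σ) → ∀ g ∈ l, ∃ p q σ, g = nSuppMap n p q σ) ∧
    ((∀ g ∈ l, ∃ p q σ, g = nSuppMap n p q σ) →
      l.prod = constMap n none ∨ ∃ p q σ, l.prod = nSuppMap n p q σ) := by
  refine ⟨?_, MapBn.prod_eq_constMap_none_or_nSuppMap hl⟩
  rintro ⟨p, q, σ, hprod⟩ g hg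
  obtain ⟨l₁, l₂, rfl⟩ := List.append_of_mem hg
  have hsuffix : MapBn.TakesTwoValues (g * l₂.prod) := by
    rw [List.prod_append, List.prod_cons] at hprod
    exact (hprod ▸ MapBn.takesTwoValues_nSuppMap hn p q σ).of_mul
  have hl₂ : MapBn.ConstOrFixesNone l₂.prod :=
    MapBn.constOrFixesNone_prod fun g' hg' => (hmem g' (by simp [hg'])).1
  exact MapBn.eq_nSuppMap_of_takesTwoValues_mul (hmem g hg).1 hl₂ hsuffix
end
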